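/- For integers v ≥ 2 and m ≥ 2, the binomial coefficient satisfies C(mv, m) > l(v) · m^(-1/2) · v^(vm) / (v-1)^((v-1)m), where l(v) = (e^(15/16)/√(2π)) · ((v-1)/v)^(v-1). -/

import Mathlib

/-!
Write `C(mv, m) = (mv)! / (m! ((v-1)m)!)` and use Stirling's formula with Robbins' error term,
`√(2πn) (n/e)^n ≤ n! ≤ √(2πn) (n/e)^n e^{1/(12n)}`. The powers of `m` and `e` cancel, leaving
`C(mv, m) ≥ (2πm)^{-1/2} √(v/(v-1)) v^{vm} / (v-1)^{(v-1)m} · e^{-1/(12m) - 1/(12(v-1)m)}`.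
The claim thus reduces to `15/16 + 1/(12m) + 1/(12(v-1)m) < (v - 1/2) log (v/(v-1))`, which
follows from the first two terms of `log (1 + 1/a) = 2 ∑ (2a+1)^{-(2k+1)} / (2k+1)`.
-/

open Real

/-- The constant `l(v)` in the lower bound on the central-type binomial coefficient. -/
noncomputable def lConst (v : ℕ) : ℝ :=
  Real.exp (15/16) / Real.sqrt (2 * π) * (((v : ℝ) - 1) / (v : ℝ)) ^ (v - 1)

open Filter Topology
open scoped Nat

namespace Stirling

theorem log_stirlingSeq_le {n : ℕ} (hn : n ≠ 0) :
    log (stirlingSeq n) ≤ log √π + 1 / (12 * n) := by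
  obtain ⟨k, rfl⟩ := Nat.exists_eq_succ_of_ne_zero hn
  -- Robbins' bound `1 / (12 n (n + 1))` makes `log (stirlingSeq n) - 1 / (12 n)` increasing.
  let f (k : ℕ) : ℝ := log (stirlingSeq (k + 1)) - 1 / (12 * (k + 1 : ℕ))
  have hf : Monotone f := monotone_nat_of_le_succ fun k => by
    have hstep := log_stirlingSeq_sdiff_le (k + 1)
    have htelescope : (1 : ℝ) / (12 * (k + 1) * (k + 1 + 1)) =
        1 / (12 * (k + 1)) - 1 / (12 * (k + 1 + 1)) := by
      field_simp; ring
    simp only [f]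
    push_cast at hstep ⊢
    linarith
  have hlim : Tendsto f atTop (𝓝 (log √π - 0)) := by
    refine ((tendsto_stirlingSeq_sqrt_pi.comp (tendsto_add_atTop_nat 1)).log
      (by positivity)).sub ?_
    exact tendsto_const_nhds.div_atTop <|
      (tendsto_natCast_atTop_atTop.const_mul_atTop (by norm_num)).comp (tendsto_add_atTop_nat 1)
  have := hf.ge_of_tendsto hlim k
  simp only [f, sub_zero] at this
  linarith

theorem log_factorial_le_stirling {n : ℕ} (hn : n ≠ 0) :
    log n ! ≤ n * log n - n + log n / 2 + log (2 * π) / 2 + 1 / (12 * n) := by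
  have hformula := log_stirlingSeq_formula n
  have hle := log_stirlingSeq_le hn
  rw [log_sqrt pi_pos.le] at hle
  rw [log_mul two_ne_zero (by positivity), log_div (by positivity) (exp_ne_zero 1),
    log_exp] at hformula
  rw [log_mul two_ne_zero pi_pos.ne']
  nlinarith

end Stirling

theorem log_choose_add_ge {a b : ℕ} (ha : a ≠ 0) (hb : b ≠ 0) :
    (a + b) * log (a + b) - a * log a - b * log b
        + (log (a + b) - log a - log b - log (2 * π)) / 2 - 1 / (12 * a) - 1 / (12 * b)
      ≤ log ((a + b).choose a) := by
  have hchoose : ((a + b).choose a : ℝ) = (a + b)! / (a ! * b !) := by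
    rw [Nat.cast_choose ℝ (Nat.le_add_right a b), Nat.add_sub_cancel_left]
  have hab := Stirling.le_log_factorial_stirling (n := a + b) (by omega)
  have ha' := Stirling.log_factorial_le_stirling ha
  have hb' := Stirling.log_factorial_le_stirling hb
  rw [hchoose, log_div (by positivity) (by positivity),
    log_mul (x := (a ! : ℝ)) (by positivity) (by positivity)]
  push_cast at hab
  linarith

theorem one_add_le_mul_log_one_add_inv {a : ℝ} (ha : 0 < a) :
    1 + 1 / (3 * (2 * a + 1) ^ 2) ≤ (a + 1 / 2) * log (1 + a⁻¹) := by
  have h := sum_le_hasSum (Finset.range 2) (fun i _ => by positivity) (hasSum_log_one_add_inv ha)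
  norm_num [Finset.sum_range_succ] at h
  calc 1 + 1 / (3 * (2 * a + 1) ^ 2)
      = (a + 1 / 2) * (2 * (2 * a + 1)⁻¹ + 2 / 3 * ((2 * a + 1) ^ 3)⁻¹) := by field_simp
    _ ≤ _ := by gcongr

theorem fifteen_div_sixteen_add_lt_mul_log_succ_sub_log {w m : ℕ} (hw : w ≠ 0) (hm : 2 ≤ m) :
    15 / 16 + 1 / (12 * m) + 1 / (12 * (w * m)) < (w + 1 / 2) * (log (w + 1) - log w) := by
  have hw0 : (0 : ℝ) < w := by positivity
  have hlog : log (w + 1) - log w = log (1 + (w : ℝ)⁻¹) := by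
    rw [← log_div (by positivity) hw0.ne', add_div, div_self hw0.ne', one_div]
  rw [hlog]
  refine lt_of_lt_of_le ?_ (one_add_le_mul_log_one_add_inv hw0)
  have hm' : (2 : ℝ) ≤ m := by exact_mod_cast hm
  have hm_le : 1 / (12 * (m : ℝ)) ≤ 1 / 24 := by
    rw [div_le_div_iff₀ (by positivity) (by norm_num)]; linarith
  have hwm_le : 1 / (12 * ((w : ℝ) * m)) ≤ 1 / (24 * w) := by
    rw [div_le_div_iff₀ (by positivity) (by positivity)]; nlinarith
  rcases Nat.lt_or_ge w 2 with hw1 | hw2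
  · obtain rfl : w = 1 := by omega
    norm_num at hwm_le ⊢
    linarith
  · have hw2' : (2 : ℝ) ≤ w := by exact_mod_cast hw2
    have hw_le : 1 / (24 * (w : ℝ)) ≤ 1 / 48 := by
      rw [div_le_div_iff₀ (by positivity) (by norm_num)]; linarith
    have : 0 < 1 / (3 * (2 * (w : ℝ) + 1) ^ 2) := by positivity
    linarith

theorem lConst_succ (w : ℕ) : lConst (w + 1) = exp (15 / 16) / √(2 * π) * (w / (w + 1)) ^ w := by
  simp [lConst]

theorem binom_lower_bound (v m : ℕ) (hv : 2 ≤ v) (hm : 2 ≤ m) :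
    lConst v * (m : ℝ) ^ (-(1/2 : ℝ)) * (v : ℝ) ^ (v * m) / ((v : ℝ) - 1) ^ ((v - 1) * m) <
      ((m * v).choose m : ℝ) := by
  obtain ⟨w, rfl⟩ : ∃ w, v = w + 1 := ⟨v - 1, by omega⟩
  have hw : w ≠ 0 := by omega
  have hm0 : m ≠ 0 := by omega
  have hw0 : (0 : ℝ) < w := by positivity
  have hm0' : (0 : ℝ) < m := by positivity
  have hchoose := log_choose_add_ge hm0 (Nat.mul_ne_zero hw hm0)
  rw [show m + w * m = m * (w + 1) by ring] at hchoose
  push_cast at hchoose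
  rw [show (m : ℝ) + w * m = m * (w + 1) by ring, log_mul hm0'.ne' (by positivity),
    log_mul hw0.ne' hm0'.ne'] at hchoose
  have hpos : (0 : ℝ) < (m * (w + 1)).choose m := mod_cast Nat.choose_pos (by nlinarith)
  rw [lConst_succ, Nat.add_sub_cancel]
  push_cast
  rw [add_sub_cancel_right, ← log_lt_log_iff (by positivity) hpos,
    log_div (by positivity) (by positivity), log_mul (by positivity) (by positivity),
    log_mul (by positivity) (by positivity), log_mul (by positivity) (by positivity),
    log_div (by positivity) (by positivity), log_exp, log_sqrt (by positivity), log_pow, log_pow,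
    log_pow, log_div (by positivity) (by positivity), log_rpow hm0']
  push_cast
  linarith [fifteen_div_sixteen_add_lt_mul_log_succ_sub_log hw hm]
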